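/- There is an absolute constant C > 0 such that for every N ∈ ℕ and all complex numbers x₁, …, x_N, the Rademacher sum S_N(t) = Σ_{n=1}^N xₙ rₙ(t) on [0,1] satisfies ‖S_N‖_{L²[0,1]} ≤ C · ‖S_N‖_{L¹[0,1]}; equivalently, (Σ_{n=1}^N |xₙ|²)^{1/2} ≤ C · ∫₀¹ |Σ_{n=1}^N xₙ rₙ(t)| dt. -/

import Mathlib

open MeasureTheory ProbabilityTheory Filter
open scoped ENNReal NNReal

noncomputable section

/-- The `n`-th Rademacher function on `[0,1]`. -/
def rademacher (n : ℕ) (t : ℝ) : ℝ := Real.sign (Real.sin (2 * Real.pi * 2 ^ n * t))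

/-- Lebesgue measure restricted to `[0,1]`, a probability measure. -/
def unitMeasure : Measure ℝ := volume.restrict (Set.Icc 0 1)

/-- A Young (Orlicz) function: convex on `[0,∞)`, nonnegative there, with
`ψ x / x → ∞` as `x → ∞` and `ψ x / x → 0` as `x → 0⁺`. -/
def IsYoungFunction (ψ : ℝ → ℝ) : Prop :=
  ConvexOn ℝ (Set.Ici 0) ψ ∧ (∀ x ∈ Set.Ici (0 : ℝ), 0 ≤ ψ x) ∧
    Tendsto (fun x => ψ x / x) atTop atTop ∧
    Tendsto (fun x => ψ x / x) (nhdsWithin 0 (Set.Ioi 0)) (nhds 0)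

/-- The Luxemburg norm `inf {λ > 0 : ∫ ψ (|f| / λ) dμ ≤ 1}` (equal to `∞` if no such `λ`). -/
def luxemburgNorm {Y : Type*} [MeasurableSpace Y] (ψ : ℝ → ℝ) (μ : Measure Y) (f : Y → ℝ) :
    ℝ≥0∞ :=
  sInf {l : ℝ≥0∞ | 0 < l ∧ l ≠ ∞ ∧ ∫⁻ y, ENNReal.ofReal (ψ (|f y| / l.toReal)) ∂μ ≤ 1}

/-- The distribution function `d_f(λ) = μ {|f| > λ}`. -/
def distribFn {Y : Type*} [MeasurableSpace Y] (μ : Measure Y) (f : Y → ℝ) (l : ℝ) : ℝ≥0∞ :=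
  μ {y | l < |f y|}

/-- The decreasing rearrangement `f^*(t) = inf {λ > 0 : d_f(λ) ≤ t}` (equal to `∞` if no such `λ`). -/
def decRearrangement {Y : Type*} [MeasurableSpace Y] (μ : Measure Y) (f : Y → ℝ) (t : ℝ) :
    ℝ≥0∞ :=
  sInf {l : ℝ≥0∞ | 0 < l ∧ l ≠ ∞ ∧ distribFn μ f l.toReal ≤ ENNReal.ofReal t}

/-- The Lorentz norm `‖f‖_{L^{p,q}}`. -/
def lorentzNorm {Y : Type*} [MeasurableSpace Y] (μ : Measure Y) (f : Y → ℝ) (p : ℝ)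
    (q : ℝ≥0∞) : ℝ≥0∞ :=
  if q = ∞ then ⨆ t : Set.Ioi (0 : ℝ), ENNReal.ofReal ((t : ℝ) ^ (1 / p)) * decRearrangement μ f t
  else (∫⁻ t in Set.Ioi (0 : ℝ),
      (ENNReal.ofReal (t ^ (1 / p)) * decRearrangement μ f t) ^ q.toReal / ENNReal.ofReal t) ^
      (1 / q.toReal)

/-!
On each dyadic interval of length `2⁻⁽ᴺ⁺¹⁾` the functions `r₁, …, r_N` are constant, and their
signs run through every pattern `ε ∈ {±1}ᴺ` exactly twice, so `∫₀¹ |S_N|` is the average of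
`‖∑ εₙ xₙ‖` over the cube. Peeling off one coordinate and using the parallelogram law (for the
second moment) or Cauchy–Schwarz (for the fourth), induction on `N` gives the cube averages
`𝔼 ‖∑ εₙ xₙ‖² = ∑ ‖xₙ‖²` and `𝔼 ‖∑ εₙ xₙ‖⁴ ≤ 3 (∑ ‖xₙ‖²)²`. The moment inequality
`(𝔼 f²)³ ≤ (𝔼 f)² 𝔼 f⁴` then gives `‖S_N‖₂ ≤ √3 ‖S_N‖₁`.
-/

open Finset Real

lemma Fin.sum_univ_fun_succ {α β : Type*} [Fintype α] [AddCommMonoid β] {N : ℕ}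
    (F : (Fin (N + 1) → α) → β) :
    ∑ ε, F ε = ∑ a, ∑ ε : Fin N → α, F (Fin.cons a ε) := by
  rw [← Fintype.sum_equiv (Fin.consEquiv fun _ => α) _ _ fun _ => rfl, Fintype.sum_prod_type]
  rfl

lemma Fin.sum_univ_fun_fin_two_succ {β : Type*} [AddCommMonoid β] {N : ℕ}
    (F : (Fin (N + 1) → Fin 2) → β) :
    ∑ ε, F ε = ∑ ε : Fin N → Fin 2, (F (Fin.cons 0 ε) + F (Fin.cons 1 ε)) := by
  rw [Fin.sum_univ_fun_succ, Fin.sum_univ_two, sum_add_distrib]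

lemma Finset.sum_sq_pow_three_le_sq_sum_mul_sum_pow_four {ι : Type*} (s : Finset ι) {f : ι → ℝ}
    (hf : ∀ i ∈ s, 0 ≤ f i) :
    (∑ i ∈ s, f i ^ 2) ^ 3 ≤ (∑ i ∈ s, f i) ^ 2 * ∑ i ∈ s, f i ^ 4 := by
  have cs₁ : (∑ i ∈ s, f i ^ 2) ^ 2 ≤ (∑ i ∈ s, f i) * ∑ i ∈ s, f i ^ 3 :=
    sum_sq_le_sum_mul_sum_of_sq_le_mul s hf (fun i hi => pow_nonneg (hf i hi) 3) fun i _ =>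
      le_of_eq (by ring)
  have cs₂ : (∑ i ∈ s, f i ^ 3) ^ 2 ≤ (∑ i ∈ s, f i ^ 2) * ∑ i ∈ s, f i ^ 4 :=
    sum_sq_le_sum_mul_sum_of_sq_le_mul s (fun i _ => sq_nonneg (f i))
      (fun i hi => pow_nonneg (hf i hi) 4) fun i _ => le_of_eq (by ring)
  have hA₂ : 0 ≤ ∑ i ∈ s, f i ^ 2 := sum_nonneg fun i _ => sq_nonneg (f i)
  have hA₄ : 0 ≤ ∑ i ∈ s, f i ^ 4 := sum_nonneg fun i hi => pow_nonneg (hf i hi) 4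
  rcases hA₂.eq_or_lt with h₀ | hpos
  · rw [← h₀, zero_pow three_ne_zero]; exact mul_nonneg (sq_nonneg _) hA₄
  refine le_of_mul_le_mul_right ?_ hpos
  calc (∑ i ∈ s, f i ^ 2) ^ 3 * ∑ i ∈ s, f i ^ 2 = ((∑ i ∈ s, f i ^ 2) ^ 2) ^ 2 := by ring
    _ ≤ ((∑ i ∈ s, f i) * ∑ i ∈ s, f i ^ 3) ^ 2 := pow_le_pow_left₀ (sq_nonneg _) cs₁ 2
    _ = (∑ i ∈ s, f i) ^ 2 * (∑ i ∈ s, f i ^ 3) ^ 2 := by ring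
    _ ≤ (∑ i ∈ s, f i) ^ 2 * ((∑ i ∈ s, f i ^ 2) * ∑ i ∈ s, f i ^ 4) := by gcongr
    _ = (∑ i ∈ s, f i) ^ 2 * (∑ i ∈ s, f i ^ 4) * ∑ i ∈ s, f i ^ 2 := by ring

section SignedSum

variable {E : Type*}

def signedSum [AddCommGroup E] [Module ℝ E] {N : ℕ} (x : Fin N → E) (ε : Fin N → Fin 2) : E :=
  ∑ n, (-1 : ℝ) ^ (ε n : ℕ) • x n

lemma signedSum_cons_zero [AddCommGroup E] [Module ℝ E] {N : ℕ} (x : Fin (N + 1) → E)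
    (ε : Fin N → Fin 2) : signedSum x (Fin.cons 0 ε) = signedSum (Fin.tail x) ε + x 0 := by
  simp only [signedSum, Fin.sum_univ_succ, Fin.cons_zero, Fin.cons_succ, Fin.val_zero, pow_zero,
    one_smul, add_comm (x 0), Fin.tail]

lemma signedSum_cons_one [AddCommGroup E] [Module ℝ E] {N : ℕ} (x : Fin (N + 1) → E)
    (ε : Fin N → Fin 2) : signedSum x (Fin.cons 1 ε) = signedSum (Fin.tail x) ε - x 0 := by
  simp only [signedSum, Fin.sum_univ_succ, Fin.cons_zero, Fin.cons_succ, Fin.val_one, pow_one,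
    neg_one_smul, neg_add_eq_sub, Fin.tail]

variable [NormedAddCommGroup E] [InnerProductSpace ℝ E]

lemma norm_add_pow_four_add_norm_sub_pow_four_le (x y : E) :
    ‖x + y‖ ^ 4 + ‖x - y‖ ^ 4 ≤ 2 * ‖x‖ ^ 4 + 12 * ‖x‖ ^ 2 * ‖y‖ ^ 2 + 2 * ‖y‖ ^ 4 := by
  have hinner : inner ℝ x y ^ 2 ≤ ‖x‖ ^ 2 * ‖y‖ ^ 2 := by
    rw [← mul_pow, ← sq_abs]
    exact pow_le_pow_left₀ (abs_nonneg _) (abs_real_inner_le_norm x y) 2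
  have h4 : ∀ z : E, ‖z‖ ^ 4 = (‖z‖ ^ 2) ^ 2 := fun z => by ring
  rw [h4, h4, norm_add_sq_real, norm_sub_sq_real]
  linear_combination 8 * hinner

lemma sum_norm_signedSum_sq (N : ℕ) (x : Fin N → E) :
    ∑ ε, ‖signedSum x ε‖ ^ 2 = 2 ^ N * ∑ n, ‖x n‖ ^ 2 := by
  induction N with
  | zero => simp [signedSum]
  | succ N ih =>
    have hsplit : ∀ ε, ‖signedSum x (Fin.cons 0 ε)‖ ^ 2 + ‖signedSum x (Fin.cons 1 ε)‖ ^ 2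
        = 2 * ‖x 0‖ ^ 2 + 2 * ‖signedSum (Fin.tail x) ε‖ ^ 2 := fun ε => by
      rw [signedSum_cons_zero, signedSum_cons_one, parallelogram_law_with_norm ℝ]
      ring
    rw [Fin.sum_univ_fun_fin_two_succ, Fintype.sum_congr _ _ hsplit, sum_add_distrib, sum_const,
      ← mul_sum, ih, Fin.sum_univ_succ, card_univ, Fintype.card_fun, Fintype.card_fin,
      Fintype.card_fin, nsmul_eq_mul]
    simp only [Fin.tail]
    push_cast
    ring

lemma sum_norm_signedSum_pow_four_le (N : ℕ) (x : Fin N → E) :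
    ∑ ε, ‖signedSum x ε‖ ^ 4 ≤ 3 * 2 ^ N * (∑ n, ‖x n‖ ^ 2) ^ 2 := by
  induction N with
  | zero => simp [signedSum]
  | succ N ih =>
    have hsq := sum_norm_signedSum_sq N (Fin.tail x)
    calc ∑ ε, ‖signedSum x ε‖ ^ 4
        ≤ ∑ ε : Fin N → Fin 2, (2 * ‖signedSum (Fin.tail x) ε‖ ^ 4
          + 12 * ‖signedSum (Fin.tail x) ε‖ ^ 2 * ‖x 0‖ ^ 2 + 2 * ‖x 0‖ ^ 4) := by
          rw [Fin.sum_univ_fun_fin_two_succ]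
          refine sum_le_sum fun ε _ => ?_
          rw [signedSum_cons_zero, signedSum_cons_one]
          exact norm_add_pow_four_add_norm_sub_pow_four_le _ _
      _ = 2 * ∑ ε, ‖signedSum (Fin.tail x) ε‖ ^ 4
          + 12 * (2 ^ N * ∑ n, ‖Fin.tail x n‖ ^ 2) * ‖x 0‖ ^ 2 + 2 ^ N * 2 * ‖x 0‖ ^ 4 := by
          rw [sum_add_distrib, sum_add_distrib, sum_const, ← mul_sum, ← sum_mul, ← mul_sum, hsq,
            card_univ, Fintype.card_fun, Fintype.card_fin, Fintype.card_fin, nsmul_eq_mul]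
          push_cast
          ring
      _ ≤ 3 * 2 ^ (N + 1) * (∑ n, ‖x n‖ ^ 2) ^ 2 := by
          rw [show ∑ n, ‖x n‖ ^ 2 = ‖x 0‖ ^ 2 + ∑ n, ‖Fin.tail x n‖ ^ 2 from Fin.sum_univ_succ _]
          have h1 := ih (Fin.tail x)
          have h2 := mul_nonneg (pow_nonneg (zero_le_two (α := ℝ)) N) (sq_nonneg (‖x 0‖ ^ 2))
          linear_combination 2 * h1 + 4 * h2

lemma sqrt_sum_norm_sq_le_sqrt_three_mul_average_norm_signedSum (N : ℕ) (x : Fin N → E) :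
    √(∑ n, ‖x n‖ ^ 2) ≤ √3 * ((∑ ε, ‖signedSum x ε‖) / 2 ^ N) := by
  set A := ∑ n, ‖x n‖ ^ 2
  set L := ∑ ε, ‖signedSum x ε‖
  have hA : 0 ≤ A := sum_nonneg fun _ _ => sq_nonneg _
  have hmoments : (2 ^ N * A) ^ 3 ≤ L ^ 2 * (3 * 2 ^ N * A ^ 2) := by
    rw [← sum_norm_signedSum_sq]
    calc _ ≤ L ^ 2 * ∑ ε, ‖signedSum x ε‖ ^ 4 :=
          sum_sq_pow_three_le_sq_sum_mul_sum_pow_four _ fun _ _ => norm_nonneg _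
      _ ≤ L ^ 2 * (3 * 2 ^ N * A ^ 2) := by gcongr; exact sum_norm_signedSum_pow_four_le N x
  rw [Real.sqrt_le_left (by positivity), mul_pow, Real.sq_sqrt zero_le_three, div_pow,
    ← mul_div_assoc, le_div_iff₀ (by positivity)]
  rcases hA.eq_or_lt with h₀ | hApos
  · rw [← h₀, zero_mul]; positivity
  refine le_of_mul_le_mul_right ?_ (by positivity : 0 < 2 ^ N * A ^ 2)
  linear_combination hmoments

end SignedSum

/-- Most significant digit first: for `t ∈ (j / 2 ^ M, (j + 1) / 2 ^ M)`, digit `k` of `j` is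
digit `k + 1` of the binary expansion of `t`. -/
def binaryDigits (M : ℕ) : Fin (2 ^ M) ≃ (Fin M → Fin 2) :=
  finFunctionFinEquiv.symm.trans (Fin.revPerm.arrowCongr (Equiv.refl _))

lemma binaryDigits_apply_val {M : ℕ} (j : Fin (2 ^ M)) (k : Fin M) :
    (binaryDigits M j k : ℕ) = j / 2 ^ (M - 1 - k) % 2 := by
  simp only [binaryDigits, Equiv.trans_apply, Equiv.arrowCongr_apply, Fin.revPerm_symm,
    Function.comp_apply, Fin.revPerm_apply, Equiv.refl_apply, finFunctionFinEquiv_symm_apply_val,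
    Fin.val_rev]
  congr 3
  omega

lemma Real.sign_sin_pi_mul_eq_neg_one_pow {q : ℕ} {u : ℝ} (hu : u ∈ Set.Ioo (q : ℝ) (q + 1)) :
    Real.sign (sin (π * u)) = (-1) ^ q := by
  have hsin : sin (π * u) = (-1) ^ q * sin (π * (u - q)) := by
    rw [← zpow_natCast, ← sin_add_int_mul_pi]
    push_cast
    ring_nf
  have hpos : 0 < sin (π * (u - q)) :=
    sin_pos_of_pos_of_lt_pi (by nlinarith [hu.1, pi_pos]) (by nlinarith [hu.2, pi_pos])
  rcases Nat.even_or_odd q with hq | hq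
  · rw [hsin, hq.neg_one_pow, one_mul, Real.sign_of_pos hpos]
  · rw [hsin, hq.neg_one_pow, neg_one_mul, Real.sign_of_neg (neg_neg_of_pos hpos)]

lemma mem_Ioo_natDiv_of_mem_Ioo_div {j m : ℕ} (hm : 0 < m) {u : ℝ}
    (hu : u ∈ Set.Ioo ((j : ℝ) / m) ((j + 1) / m)) :
    u ∈ Set.Ioo ((j / m : ℕ) : ℝ) ((j / m : ℕ) + 1) := by
  have hm' : (0 : ℝ) < m := by exact_mod_cast hm
  constructor
  · refine lt_of_le_of_lt ?_ hu.1
    rw [le_div_iff₀ hm']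
    exact_mod_cast Nat.div_mul_le_self j m
  · refine hu.2.trans_le ?_
    rw [div_le_iff₀ hm']
    have : j + 1 ≤ (j / m + 1) * m := by rw [add_mul, one_mul]; exact Nat.lt_div_mul_add hm
    exact_mod_cast this

lemma rademacher_eq_neg_one_pow_binaryDigits {M : ℕ} (j : Fin (2 ^ M)) (k : Fin M) {t : ℝ}
    (ht : t ∈ Set.Ioo ((j : ℝ) / 2 ^ M) ((j + 1) / 2 ^ M)) :
    rademacher k t = (-1) ^ (binaryDigits M j k : ℕ) := by
  set d := M - 1 - k
  have hM : (2 : ℝ) ^ M = 2 ^ d * 2 ^ (k + 1 : ℕ) := by rw [← pow_add]; congr 1; omega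
  rw [hM, ← div_div, ← div_div] at ht
  have hscaled : 2 ^ (k + 1 : ℕ) * t ∈ Set.Ioo ((j : ℝ) / (2 ^ d : ℕ)) ((j + 1) / (2 ^ d : ℕ)) := by
    push_cast
    rw [mul_comm]
    exact ⟨(div_lt_iff₀ (by positivity)).1 ht.1, (lt_div_iff₀ (by positivity)).1 ht.2⟩
  rw [rademacher, show 2 * π * 2 ^ (k : ℕ) * t = π * (2 ^ (k + 1 : ℕ) * t) by ring,
    sign_sin_pi_mul_eq_neg_one_pow (mem_Ioo_natDiv_of_mem_Ioo_div (by positivity) hscaled),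
    neg_one_pow_eq_pow_mod_two, binaryDigits_apply_val]

lemma intervalIntegral_zero_one_eq_sum_of_eqOn_Ioo {F : Type*} [NormedAddCommGroup F]
    [NormedSpace ℝ F] [CompleteSpace F] {K : ℕ} (hK : 0 < K) {f : ℝ → F} (c : Fin K → F)
    (hf : ∀ j : Fin K, Set.EqOn f (fun _ => c j) (Set.Ioo ((j : ℝ) / K) ((j + 1) / K))) :
    ∫ t in (0 : ℝ)..1, f t = (K : ℝ)⁻¹ • ∑ j, c j := by
  have hK' : (0 : ℝ) < K := by exact_mod_cast hK
  set a : ℕ → ℝ := fun j => j / K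
  have hmono : ∀ j, a j ≤ a (j + 1) := fun j => by simp only [a]; gcongr; simp
  have hpiece : ∀ j : Fin K, IntervalIntegrable f volume (a j) (a (j + 1)) ∧
      ∫ t in a j..a (j + 1), f t = (K : ℝ)⁻¹ • c j := by
    intro j
    have hIoo : IntegrableOn f (Set.Ioo (a j) (a (j + 1))) :=
      (integrableOn_const (by simp)).congr_fun (fun t ht => (hf j (by simpa [a] using ht)).symm)
        measurableSet_Ioo
    refine ⟨(intervalIntegrable_iff_integrableOn_Ioc_of_le (hmono j)).2
      ((integrableOn_Ioc_iff_integrableOn_Ioo enorm_ne_top).2 hIoo), ?_⟩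
    rw [intervalIntegral.integral_of_le (hmono j), integral_Ioc_eq_integral_Ioo,
      setIntegral_congr_fun measurableSet_Ioo (fun t ht => hf j (by simpa [a] using ht)),
      setIntegral_const, Real.volume_real_Ioo_of_le (hmono j)]
    congr 1
    simp only [a]
    push_cast
    field_simp
    ring
  have hsum := intervalIntegral.sum_integral_adjacent_intervals (f := f) (μ := volume) (a := a)
    (n := K) fun k hk => (hpiece ⟨k, hk⟩).1
  have ha0 : a 0 = 0 := by simp [a]
  have haK : a K = 1 := div_self hK'.ne'
  rw [← ha0, ← haK, ← hsum, ← Fin.sum_univ_eq_sum_range, smul_sum]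
  exact Fintype.sum_congr _ _ fun j => (hpiece j).2

/-- There is an absolute constant `C > 0` such that for all complex
`x₁, …, x_N`, `(∑ |xₙ|²)^{1/2} ≤ C * ∫₀¹ |∑ xₙ rₙ(t)| dt`, i.e.
`‖S_N‖_{L²[0,1]} ≤ C * ‖S_N‖_{L¹[0,1]}`. -/
theorem rademacher_L2_le_L1 :
    ∃ C > (0 : ℝ), ∀ (N : ℕ) (x : Fin N → ℂ),
      Real.sqrt (∑ n, ‖x n‖ ^ 2) ≤
        C * ∫ t in (0 : ℝ)..1, ‖∑ n, x n * (rademacher (n.1 + 1) t : ℂ)‖ := by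
  refine ⟨√3, by positivity, fun N x => ?_⟩
  have hstep : ∀ j : Fin (2 ^ (N + 1)),
      Set.EqOn (fun t => ‖∑ n, x n * (rademacher (n.1 + 1) t : ℂ)‖)
        (fun _ => ‖signedSum x (Fin.tail (binaryDigits (N + 1) j))‖)
        (Set.Ioo ((j : ℝ) / (2 ^ (N + 1) : ℕ)) ((j + 1) / (2 ^ (N + 1) : ℕ))) := by
    intro j t ht
    push_cast at ht
    simp only [signedSum, Fin.tail, ← rademacher_eq_neg_one_pow_binaryDigits j _ ht, Fin.val_succ,
      Complex.real_smul, mul_comm]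
  rw [intervalIntegral_zero_one_eq_sum_of_eqOn_Ioo (by positivity) _ hstep,
    Fintype.sum_equiv (binaryDigits (N + 1)) _ (fun ε => ‖signedSum x (Fin.tail ε)‖) fun _ => rfl,
    Fin.sum_univ_fun_fin_two_succ]
  simp only [Fin.tail_cons, ← two_mul, ← mul_sum, smul_eq_mul]
  calc √(∑ n, ‖x n‖ ^ 2) ≤ √3 * ((∑ ε, ‖signedSum x ε‖) / 2 ^ N) :=
        sqrt_sum_norm_sq_le_sqrt_three_mul_average_norm_signedSum N x
    _ = √3 * (((2 ^ (N + 1) : ℕ) : ℝ)⁻¹ * (2 * ∑ ε, ‖signedSum x ε‖)) := by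
        push_cast
        field_simp
        ring
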